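/- Let p be a prime and n > 3. Define V(i,j) for i,j ∈ {0,...,n} by: V(0,0)=1, V(0,j)=0 for 0<j<n−1, V(0,n−1)=1, V(0,n)=p^n; for 0<i<n: V(i,0)=0, V(i,j)=−p^{i−j−1} if 0<j<n−1 and i>j, 0 if 0<j<n−1 and i≤j, V(i,n−1)=p^{i−1}, V(i,n)=p^{n−i−1}; V(n,j)=0 for j<n and V(n,n)=1. Define V'(i,j) by: V'(0,0)=1, V'(0,1)=−1, V'(0,j)=0 for 1<j<n, V'(0,n)=−p^{n−2}(p^2−1); for 0<i<n−1: V'(i,0)=0, V'(i,j)=p if i=j, −1 if i=j−1, 0 otherwise (for 0<j<n), V'(i,n)=−p^{n−i−2}(p^2−1); V'(n−1,0)=0, V'(n−1,1)=1, V'(n−1,j)=0 for 1<j<n, V'(n−1,n)=−p^{n−2}; V'(n,j)=0 for j<n, V'(n,n)=1. Then V·V' is the identity matrix. -/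
import Mathlib


/-- The matrix `V` from the Smith normal form factorization of `B_{p^n}` (`n > 3`). -/
def Vent (p n i j : ℕ) : ℤ :=
  if i = 0 then
    (if j = 0 then 1 else if j = n - 1 then 1 else if j = n then (p : ℤ) ^ n else 0)
  else if i = n then (if j = n then 1 else 0)
  else
    (if j = 0 then 0 else if j = n - 1 then (p : ℤ) ^ (i - 1)
      else if j = n then (p : ℤ) ^ (n - i - 1)
      else if j < i then -(p : ℤ) ^ (i - j - 1) else 0)

/-- The matrix `V'` from the Smith normal form factorization of `B_{p^n}` (`n > 3`). -/
def V'ent (p n i j : ℕ) : ℤ :=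
  if i = 0 then
    (if j = 0 then 1 else if j = 1 then -1
      else if j = n then -(p : ℤ) ^ (n - 2) * ((p : ℤ) ^ 2 - 1) else 0)
  else if i = n - 1 then
    (if j = 1 then 1 else if j = n then -(p : ℤ) ^ (n - 2) else 0)
  else if i = n then (if j = n then 1 else 0)
  else
    (if j = n then -(p : ℤ) ^ (n - i - 2) * ((p : ℤ) ^ 2 - 1)
      else if i = j then (p : ℤ) else if i + 1 = j then -1 else 0)

private lemma Vent_mid (p n i k : ℕ) (hi0 : i ≠ 0) (hin : i ≠ n) :
    Vent p n i k = if k = 0 then 0 else if k = n - 1 then (p:ℤ)^(i-1)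
      else if k = n then (p:ℤ)^(n-i-1) else if k < i then -(p:ℤ)^(i-k-1) else 0 := by
  unfold Vent; rw [if_neg hi0, if_neg hin]

private lemma V'ent_mid (p n k j : ℕ) (h1 : k ≠ 0) (h2 : k ≠ n - 1) (h3 : k ≠ n) :
    V'ent p n k j = if j = n then -(p:ℤ)^(n-k-2)*((p:ℤ)^2-1)
      else if k = j then (p:ℤ) else if k + 1 = j then -1 else 0 := by
  unfold V'ent; rw [if_neg h1, if_neg h2, if_neg h3]

private lemma V'ent_pred (p n j : ℕ) (hn : 3 < n) :
    V'ent p n (n-1) j = if j = 1 then 1 else if j = n then -(p:ℤ)^(n-2) else 0 := by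
  unfold V'ent; rw [if_neg (show ¬(n - 1 = 0) by omega), if_pos rfl]

private lemma V'ent_last (p n j : ℕ) (hn : 3 < n) :
    V'ent p n n j = if j = n then 1 else 0 := by
  unfold V'ent
  rw [if_neg (show ¬(n = 0) by omega), if_neg (show ¬(n = n - 1) by omega), if_pos rfl]

private lemma tele (P : ℤ) (n i : ℕ) (hi : 0 < i) (hin : i < n) :
    ∑ k ∈ Finset.Ico 1 i, P ^ (i - k - 1) * (P ^ (n - k - 2) * (P ^ 2 - 1)) =
      P ^ (n + i - 3) - P ^ (n - i - 1) := by
  rw [Finset.sum_Ico_eq_sum_range, ← Finset.sum_range_reflect]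
  have h1 : ∀ m ∈ Finset.range (i - 1),
      P ^ (i - (1 + (i - 1 - 1 - m)) - 1) *
        (P ^ (n - (1 + (i - 1 - 1 - m)) - 2) * (P ^ 2 - 1))
        = P ^ (n - i - 1) * ((P ^ 2) ^ m * (P ^ 2 - 1)) := by
    intro m hm
    rw [Finset.mem_range] at hm
    have e1 : i - (1 + (i - 1 - 1 - m)) - 1 = m := by omega
    have e2 : n - (1 + (i - 1 - 1 - m)) - 2 = n - i - 1 + m := by omega
    rw [e1, e2]
    have e3 : P ^ m * P ^ (n - i - 1 + m) = P ^ (n - i - 1) * (P ^ 2) ^ m := by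
      rw [← pow_mul, ← pow_add, ← pow_add]; congr 1; omega
    calc P ^ m * (P ^ (n - i - 1 + m) * (P ^ 2 - 1))
        = (P ^ m * P ^ (n - i - 1 + m)) * (P ^ 2 - 1) := by ring1
      _ = (P ^ (n - i - 1) * (P ^ 2) ^ m) * (P ^ 2 - 1) := by rw [e3]
      _ = P ^ (n - i - 1) * ((P ^ 2) ^ m * (P ^ 2 - 1)) := by ring1
  rw [Finset.sum_congr rfl h1, ← Finset.mul_sum]
  have h2 : ∑ m ∈ Finset.range (i - 1), ((P ^ 2) ^ m * (P ^ 2 - 1))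
      = (P ^ 2) ^ (i - 1) - 1 := by
    rw [← Finset.sum_mul, geom_sum_mul]
  rw [h2]
  have h3 : P ^ (n - i - 1) * (P ^ 2) ^ (i - 1) = P ^ (n + i - 3) := by
    rw [← pow_mul, ← pow_add]; congr 1; omega
  rw [mul_sub, h3, mul_one]

private lemma key (p n i j : ℕ) (hn : 3 < n) (hi : i ≤ n) (hj : j ≤ n) :
    ∑ k ∈ Finset.range (n + 1), Vent p n i k * V'ent p n k j
      = if i = j then 1 else 0 := by
  have hsplit : n + 1 = (n - 1) + 1 + 1 := by omega
  have hn1 : n - 1 + 1 = n := by omega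
  rcases eq_or_ne i 0 with rfl | hi0
  · -- row i = 0
    rw [hsplit, Finset.sum_range_succ, Finset.sum_range_succ, hn1]
    have hmain : ∑ k ∈ Finset.range (n - 1), Vent p n 0 k * V'ent p n k j
        = V'ent p n 0 j := by
      rw [Finset.sum_eq_single_of_mem 0 (Finset.mem_range.mpr (by omega))
        (fun k hk hk0 => by
          rw [Finset.mem_range] at hk
          have h0 : Vent p n 0 k = 0 := by
            unfold Vent
            rw [if_pos rfl, if_neg hk0, if_neg (show ¬(k = n - 1) by omega),
              if_neg (show ¬(k = n) by omega)]
          rw [h0, zero_mul])]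
      have h1 : Vent p n 0 0 = 1 := by unfold Vent; rw [if_pos rfl, if_pos rfl]
      rw [h1, one_mul]
    rw [hmain]
    have hV1 : Vent p n 0 (n - 1) = 1 := by
      unfold Vent; rw [if_pos rfl, if_neg (show ¬(n - 1 = 0) by omega), if_pos rfl]
    have hV2 : Vent p n 0 n = (p:ℤ) ^ n := by
      unfold Vent
      rw [if_pos rfl, if_neg (show ¬(n = 0) by omega),
        if_neg (show ¬(n = n - 1) by omega), if_pos rfl]
    rw [hV1, hV2, one_mul, V'ent_pred p n j hn, V'ent_last p n j hn]
    have h0 : V'ent p n 0 j = if j = 0 then 1 else if j = 1 then -1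
        else if j = n then -(p:ℤ)^(n-2) * ((p:ℤ)^2 - 1) else 0 := by
      unfold V'ent; rw [if_pos rfl]
    rw [h0]
    have hpow : (p:ℤ) ^ n = (p:ℤ) ^ (n - 2) * (p:ℤ) ^ 2 := by
      rw [← pow_add]; congr 1; omega
    split_ifs <;> first | ring1 | (exfalso; omega) | (rw [hpow]; ring1)
  · by_cases hin : i = n
    · -- row i = n
      rw [hin]
      rw [Finset.sum_eq_single_of_mem n (Finset.mem_range.mpr (by omega))
        (fun k hk hkn => by
          have h0 : Vent p n n k = 0 := by
            unfold Vent
            rw [if_neg (show ¬(n = 0) by omega), if_pos rfl, if_neg hkn]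
          rw [h0, zero_mul])]
      have h1 : Vent p n n n = 1 := by
        unfold Vent; rw [if_neg (show ¬(n = 0) by omega), if_pos rfl, if_pos rfl]
      rw [h1, one_mul, V'ent_last p n j hn]
      split_ifs <;> first | rfl | (exfalso; omega)
    · -- middle rows 0 < i < n
      have hi0' : 0 < i := Nat.pos_of_ne_zero hi0
      have hin' : i < n := lt_of_le_of_ne hi hin
      rw [hsplit, Finset.sum_range_succ, Finset.sum_range_succ, hn1]
      have hVn1 : Vent p n i (n - 1) = (p:ℤ) ^ (i - 1) := by
        rw [Vent_mid p n i (n-1) hi0 hin, if_neg (show ¬(n - 1 = 0) by omega), if_pos rfl]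
      have hVn : Vent p n i n = (p:ℤ) ^ (n - i - 1) := by
        rw [Vent_mid p n i n hi0 hin, if_neg (show ¬(n = 0) by omega),
          if_neg (show ¬(n = n - 1) by omega), if_pos rfl]
      have hsub : Finset.Ico 1 i ⊆ Finset.range (n - 1) := by
        intro k hk
        rw [Finset.mem_Ico] at hk
        exact Finset.mem_range.mpr (by omega)
      have hzero : ∀ k ∈ Finset.range (n - 1), k ∉ Finset.Ico 1 i →
          Vent p n i k * V'ent p n k j = 0 := by
        intro k hk hk'
        rw [Finset.mem_range] at hk
        rw [Finset.mem_Ico] at hk'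
        have h0 : Vent p n i k = 0 := by
          rw [Vent_mid p n i k hi0 hin]
          rcases eq_or_ne k 0 with rfl | hk0
          · rw [if_pos rfl]
          · rw [if_neg hk0, if_neg (show ¬(k = n - 1) by omega),
              if_neg (show ¬(k = n) by omega), if_neg (show ¬(k < i) by omega)]
        rw [h0, zero_mul]
      have hmain : ∑ k ∈ Finset.range (n - 1), Vent p n i k * V'ent p n k j
          = ∑ k ∈ Finset.Ico 1 i, (-(p:ℤ) ^ (i - k - 1)) * V'ent p n k j := by
        rw [← Finset.sum_subset hsub hzero]
        refine Finset.sum_congr rfl fun k hk => ?_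
        rw [Finset.mem_Ico] at hk
        congr 1
        rw [Vent_mid p n i k hi0 hin, if_neg (show ¬(k = 0) by omega),
          if_neg (show ¬(k = n - 1) by omega), if_neg (show ¬(k = n) by omega),
          if_pos hk.2]
      rw [hmain, hVn1, hVn, V'ent_pred p n j hn, V'ent_last p n j hn]
      by_cases hjn : j = n
      · -- column j = n
        rw [hjn]
        have hterm : ∀ k ∈ Finset.Ico 1 i,
            (-(p:ℤ) ^ (i - k - 1)) * V'ent p n k n
              = (p:ℤ) ^ (i - k - 1) * ((p:ℤ) ^ (n - k - 2) * ((p:ℤ) ^ 2 - 1)) := by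
          intro k hk
          rw [Finset.mem_Ico] at hk
          rw [V'ent_mid p n k n (show k ≠ 0 by omega) (show k ≠ n - 1 by omega)
            (show k ≠ n by omega), if_pos rfl]
          ring1
        rw [Finset.sum_congr rfl hterm, tele (p:ℤ) n i hi0' hin',
          if_neg (show ¬(n = 1) by omega), if_pos rfl, if_pos rfl,
          if_neg (show ¬(i = n) by omega)]
        have hpow : (p:ℤ) ^ (i - 1) * (p:ℤ) ^ (n - 2) = (p:ℤ) ^ (n + i - 3) := by
          rw [← pow_add]; congr 1; omega
        calc (p:ℤ) ^ (n + i - 3) - (p:ℤ) ^ (n - i - 1)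
              + (p:ℤ) ^ (i - 1) * -(p:ℤ) ^ (n - 2) + (p:ℤ) ^ (n - i - 1) * 1
            = -((p:ℤ) ^ (i - 1) * (p:ℤ) ^ (n - 2)) + (p:ℤ) ^ (n + i - 3) := by ring1
          _ = 0 := by rw [hpow]; ring1
      · -- column j ≠ n
        rw [if_neg hjn, if_neg hjn, mul_zero, add_zero]
        have hVk : ∀ k, 0 < k → k < i → V'ent p n k j =
            if k = j then (p:ℤ) else if k + 1 = j then -1 else 0 := by
          intro k h1 h2
          rw [V'ent_mid p n k j (show k ≠ 0 by omega) (show k ≠ n - 1 by omega)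
            (show k ≠ n by omega), if_neg hjn]
        by_cases hji : j = i
        · -- diagonal
          rw [if_pos hji.symm]
          by_cases hi1 : i = 1
          · rw [show Finset.Ico 1 i = ∅ from by rw [hi1, Finset.Ico_self],
              Finset.sum_empty, if_pos (show j = 1 by omega),
              show i - 1 = 0 from by omega]
            norm_num
          · rw [if_neg (show ¬(j = 1) by omega), mul_zero, add_zero]
            rw [Finset.sum_eq_single_of_mem (j - 1) (Finset.mem_Ico.mpr (by omega))
              (fun k hk hk' => by
                rw [Finset.mem_Ico] at hk
                rw [hVk k (by omega) (by omega), if_neg (show ¬(k = j) by omega),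
                  if_neg (show ¬(k + 1 = j) by omega), mul_zero])]
            rw [hVk (j-1) (by omega) (by omega), if_neg (show ¬(j - 1 = j) by omega),
              if_pos (show j - 1 + 1 = j by omega)]
            have e0 : i - (j - 1) - 1 = 0 := by omega
            rw [e0]
            ring1
        · -- off-diagonal
          rw [if_neg (show ¬(i = j) by omega)]
          rcases lt_or_ge i j with h | h
          · -- j > i
            rw [Finset.sum_eq_zero (fun k hk => by
              rw [Finset.mem_Ico] at hk
              rw [hVk k (by omega) (by omega), if_neg (show ¬(k = j) by omega),
                if_neg (show ¬(k + 1 = j) by omega), mul_zero]),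
              if_neg (show ¬(j = 1) by omega), mul_zero, add_zero]
          · have hji' : j < i := lt_of_le_of_ne h (by omega)
            by_cases hj0 : j = 0
            · rw [Finset.sum_eq_zero (fun k hk => by
                rw [Finset.mem_Ico] at hk
                rw [hVk k (by omega) (by omega), if_neg (show ¬(k = j) by omega),
                  if_neg (show ¬(k + 1 = j) by omega), mul_zero]),
                if_neg (show ¬(j = 1) by omega), mul_zero, add_zero]
            · by_cases hj1 : j = 1
              · rw [if_pos hj1, mul_one]
                rw [Finset.sum_eq_single_of_mem 1 (Finset.mem_Ico.mpr (by omega))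
                  (fun k hk hk' => by
                    rw [Finset.mem_Ico] at hk
                    rw [hVk k (by omega) (by omega), if_neg (show ¬(k = j) by omega),
                      if_neg (show ¬(k + 1 = j) by omega), mul_zero])]
                rw [hVk 1 (by omega) (by omega), if_pos hj1.symm]
                have hpow : (p:ℤ) ^ (i - 1 - 1) * (p:ℤ) = (p:ℤ) ^ (i - 1) := by
                  rw [← pow_succ]; congr 1; omega
                calc -(p:ℤ) ^ (i - 1 - 1) * (p:ℤ) + (p:ℤ) ^ (i - 1)
                    = -((p:ℤ) ^ (i - 1 - 1) * (p:ℤ)) + (p:ℤ) ^ (i - 1) := by ring1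
                  _ = 0 := by rw [hpow]; ring1
              · -- 2 ≤ j < i
                rw [if_neg (show ¬(j = 1) by omega), mul_zero, add_zero]
                have hsub2 : ({j - 1, j} : Finset ℕ) ⊆ Finset.Ico 1 i := by
                  intro k hk
                  simp only [Finset.mem_insert, Finset.mem_singleton] at hk
                  rw [Finset.mem_Ico]
                  omega
                have hzero2 : ∀ k ∈ Finset.Ico 1 i, k ∉ ({j - 1, j} : Finset ℕ) →
                    (-(p:ℤ) ^ (i - k - 1)) * V'ent p n k j = 0 := by
                  intro k hk hk'
                  rw [Finset.mem_Ico] at hk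
                  simp only [Finset.mem_insert, Finset.mem_singleton] at hk'
                  rw [hVk k (by omega) (by omega), if_neg (show ¬(k = j) by omega),
                    if_neg (show ¬(k + 1 = j) by omega), mul_zero]
                rw [← Finset.sum_subset hsub2 hzero2]
                rw [Finset.sum_pair (show j - 1 ≠ j by omega)]
                rw [hVk (j-1) (by omega) (by omega), hVk j (by omega) (by omega)]
                rw [if_neg (show ¬(j - 1 = j) by omega),
                  if_pos (show j - 1 + 1 = j by omega), if_pos rfl]
                have e1 : i - (j - 1) - 1 = i - j := by omega
                have hpow : (p:ℤ) ^ (i - j - 1) * (p:ℤ) = (p:ℤ) ^ (i - j) := by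
                  rw [← pow_succ]; congr 1; omega
                rw [e1]
                calc -(p:ℤ) ^ (i - j) * -1 + -(p:ℤ) ^ (i - j - 1) * (p:ℤ)
                    = (p:ℤ) ^ (i - j) - (p:ℤ) ^ (i - j - 1) * (p:ℤ) := by ring1
                  _ = 0 := by rw [hpow]; ring1

/-- `V · V'` is the identity matrix. -/
theorem stmt_4 (p n : ℕ) (hp : p.Prime) (hn : 3 < n) :
    (Matrix.of fun i j : Fin (n + 1) => Vent p n (i : ℕ) (j : ℕ)) *
      (Matrix.of fun i j : Fin (n + 1) => V'ent p n (i : ℕ) (j : ℕ)) = 1 := by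
  ext i j
  rw [Matrix.mul_apply, Matrix.one_apply]
  simp only [Matrix.of_apply]
  rw [Fin.sum_univ_eq_sum_range (fun k => Vent p n (i : ℕ) k * V'ent p n k (j : ℕ)),
    key p n i j hn (by omega) (by omega)]
  simp only [Fin.val_eq_val]
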